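/- arXiv:1302.5991 — 7 statements merged into one kernel-verified Lean document; each statement's English description precedes it below -/
import Mathlib

section
/- If N = q^k * n^2 is an odd perfect number with q prime, q ≡ 1 (mod 4), k ≡ 1 (mod 4), and gcd(q, n) = 1, and if n < q, then k = 1. -/
/-- The sum-of-divisors function. -/
def sigma (n : ℕ) : ℕ := ∑ d ∈ n.divisors, d

/-- The abundancy index as a rational number. -/
noncomputable def Iq (x : ℕ) : ℚ := (sigma x : ℚ) / x

/-- The abundancy index as a real number. -/
noncomputable def Ir (x : ℕ) : ℝ := (sigma x : ℝ) / x

/-!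
Since `σ(q^k) ≡ 1 (mod q)`, the factor `q^k` of `2N = σ(q^k) σ(n²)` must divide `σ(n²)`,
while `σ(q^k) ≥ q^k` forces `σ(n²) ≤ 2n²`. Hence `q^k ≤ 2n² < 2q² ≤ q³`, so `k < 3`,
and `k ≡ 1 (mod 4)` leaves only `k = 1`.
-/

lemma sigma_eq_sigma_one (n : ℕ) : sigma n = ArithmeticFunction.sigma 1 n :=
  (ArithmeticFunction.sigma_one_apply n).symm

lemma sigma_mul_of_coprime {a b : ℕ} (hab : a.Coprime b) :
    sigma (a * b) = sigma a * sigma b := by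
  simp only [sigma_eq_sigma_one]
  exact ArithmeticFunction.isMultiplicative_sigma.map_mul_of_coprime hab

lemma le_sigma (n : ℕ) : n ≤ sigma n := by
  rcases n.eq_zero_or_pos with rfl | hn
  · exact Nat.zero_le _
  · exact Finset.single_le_sum (f := fun d => d) (fun _ _ => Nat.zero_le _)
      (Nat.mem_divisors_self n hn.ne')

lemma Nat.Prime.coprime_sigma_pow {p : ℕ} (hp : p.Prime) (k : ℕ) : p.Coprime (sigma (p ^ k)) := by
  rw [sigma_eq_sigma_one, ArithmeticFunction.sigma_one_apply_prime_pow hp,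
    Finset.sum_range_succ', pow_zero]
  simp only [pow_succ', ← Finset.mul_sum]
  exact (Nat.coprime_mul_left_add_right p 1 _).2 (Nat.coprime_one_right p)

lemma sigma_le_two_mul_of_perfect_mul {a b : ℕ} (hab : a.Coprime b)
    (hperf : sigma (a * b) = 2 * (a * b)) (ha : 0 < a) : sigma b ≤ 2 * b := by
  have h : a * sigma b ≤ a * (2 * b) :=
    calc a * sigma b ≤ sigma a * sigma b := Nat.mul_le_mul_right _ (le_sigma a)
      _ = a * (2 * b) := by rw [← sigma_mul_of_coprime hab, hperf]; ring
  exact Nat.le_of_mul_le_mul_left h ha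

lemma dvd_sigma_of_perfect_mul {a b : ℕ} (hab : a.Coprime b)
    (hperf : sigma (a * b) = 2 * (a * b)) (ha : a.Coprime (sigma a)) : a ∣ sigma b := by
  apply ha.dvd_of_dvd_mul_left
  rw [← sigma_mul_of_coprime hab, hperf]
  exact Dvd.dvd.mul_left (Nat.dvd_mul_right a b) 2

theorem stmt0_general (q k n N : ℕ)
    (hq : Nat.Prime q) (hk4 : k % 4 = 1)
    (hco : Nat.Coprime q n) (hN : N = q ^ k * n ^ 2)
    (hperf : sigma N = 2 * N) (h : n < q) :
    k = 1 := by
  subst hN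
  have hn : 0 < n := Nat.pos_of_ne_zero fun hn0 =>
    hq.one_lt.ne' (Nat.coprime_zero_right q |>.1 (hn0 ▸ hco))
  have hcop : (q ^ k).Coprime (n ^ 2) := hco.pow k 2
  have hdvd : q ^ k ∣ sigma (n ^ 2) :=
    dvd_sigma_of_perfect_mul hcop hperf ((hq.coprime_sigma_pow k).pow_left k)
  have hsigma_pos : 0 < sigma (n ^ 2) := (pow_pos hn 2).trans_le (le_sigma _)
  have hlt : q ^ k < q ^ 3 :=
    calc q ^ k ≤ sigma (n ^ 2) := Nat.le_of_dvd hsigma_pos hdvd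
      _ ≤ 2 * n ^ 2 := sigma_le_two_mul_of_perfect_mul hcop hperf (pow_pos hq.pos k)
      _ < 2 * q ^ 2 := by gcongr
      _ ≤ q * q ^ 2 := Nat.mul_le_mul_right _ hq.two_le
      _ = q ^ 3 := by ring
  have hk3 : k < 3 := (Nat.pow_lt_pow_iff_right hq.one_lt).1 hlt
  omega

theorem stmt0 (q k n N : ℕ)
    (hq : Nat.Prime q) (hq4 : q % 4 = 1) (hk4 : k % 4 = 1)
    (hco : Nat.Coprime q n) (hN : N = q ^ k * n ^ 2)
    (hodd : Odd N) (hperf : sigma N = 2 * N) (h : n < q) :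
    k = 1 :=
  stmt0_general q k n N hq hk4 hco hN hperf h
end

section
/- If N = q^k * n^2 is an odd perfect number in Eulerian form, then σ(n) ≠ q^k. -/
open Finset

lemma geom_sum_mul_one_add_pow (p c : ℕ) :
    (∑ i ∈ range (c + 1), p ^ i) * (1 + p ^ (c + 1)) =
      ∑ i ∈ range (2 * c + 1), p ^ i + p ^ (2 * c + 1) := by
  rw [← sum_range_succ, show 2 * c + 1 + 1 = (c + 1) + (c + 1) by ring, sum_range_add _ (c + 1),
    mul_add, mul_one, sum_mul]
  simp only [pow_add, mul_comm]

lemma not_dvd_geom_sum_two_mul {q p c : ℕ} (hq : q.Prime) (hqp : ¬ q ∣ p)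
    (h : q ∣ ∑ i ∈ range (c + 1), p ^ i) : ¬ q ∣ ∑ i ∈ range (2 * c + 1), p ^ i := by
  intro h2
  have hsum : q ∣ ∑ i ∈ range (2 * c + 1), p ^ i + p ^ (2 * c + 1) := by
    rw [← geom_sum_mul_one_add_pow]
    exact h.mul_right _
  exact hqp (hq.dvd_of_dvd_pow ((Nat.dvd_add_right h2).mp hsum))

lemma not_dvd_geom_sum_self {q : ℕ} (hq : q ≠ 1) (k : ℕ) : ¬ q ∣ ∑ i ∈ range (k + 1), q ^ i := by
  rw [sum_range_succ', pow_zero]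
  intro h
  have hq_dvd : q ∣ ∑ i ∈ range k, q ^ (i + 1) := dvd_sum fun i _ => dvd_pow_self q i.succ_ne_zero
  exact hq (Nat.dvd_one.mp ((Nat.dvd_add_right hq_dvd).mp h))

lemma sigma_mul_of_coprime_s4 {m n : ℕ} (h : m.Coprime n) : sigma (m * n) = sigma m * sigma n :=
  h.sum_divisors_mul

lemma sigma_prime_pow {p : ℕ} (hp : p.Prime) (k : ℕ) :
    sigma (p ^ k) = ∑ i ∈ range (k + 1), p ^ i :=
  Nat.sum_divisors_prime_pow hp

lemma sigma_sq_eq_prod_primeFactors {n : ℕ} (hn : n ≠ 0) :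
    sigma (n ^ 2) = ∏ p ∈ n.primeFactors, ∑ i ∈ range (2 * n.factorization p + 1), p ^ i := by
  rw [sigma, Nat.sum_divisors (pow_ne_zero 2 hn), Nat.primeFactors_pow n two_ne_zero]
  simp only [Nat.factorization_pow, Finsupp.smul_apply, smul_eq_mul]

lemma dvd_geom_sum_factorization_of_sigma_eq_pow {q n k p : ℕ} (hq : q.Prime)
    (h : sigma n = q ^ k) (hp : p ∈ n.primeFactors) :
    q ∣ ∑ i ∈ range (n.factorization p + 1), p ^ i := by
  obtain ⟨hpp, hpn, hn⟩ := Nat.mem_primeFactors.mp hp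
  have hdvd : ∑ i ∈ range (n.factorization p + 1), p ^ i ∣ q ^ k := by
    rw [← h, sigma, Nat.sum_divisors hn]
    exact dvd_prod_of_mem _ hp
  have hgt : 1 < ∑ i ∈ range (n.factorization p + 1), p ^ i :=
    (Nat.one_lt_pow (hpp.factorization_pos_of_dvd hn hpn).ne' hpp.one_lt).trans_le
      (single_le_sum (fun _ _ => Nat.zero_le _) (self_mem_range_succ _))
  obtain ⟨e, -, he⟩ := (Nat.dvd_prime_pow hq).mp hdvd
  rw [he] at hgt ⊢
  exact dvd_pow_self q (by rintro rfl; simp at hgt)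

lemma not_dvd_sigma_sq_of_sigma_eq_pow {q n k : ℕ} (hq : q.Prime) (hco : q.Coprime n)
    (h : sigma n = q ^ k) : ¬ q ∣ sigma (n ^ 2) := by
  have hn : n ≠ 0 := by
    rintro rfl
    exact pow_ne_zero k hq.ne_zero (by simpa [sigma] using h.symm)
  rw [sigma_sq_eq_prod_primeFactors hn, hq.prime.dvd_finsetProd_iff]
  rintro ⟨p, hp, hdvd⟩
  have hqp : ¬ q ∣ p := fun hqp =>
    (hq.coprime_iff_not_dvd.mp hco) (hqp.trans (Nat.dvd_of_mem_primeFactors hp))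
  exact not_dvd_geom_sum_two_mul hq hqp (dvd_geom_sum_factorization_of_sigma_eq_pow hq h hp) hdvd

theorem stmt4_general (q k n N : ℕ)
    (hq : Nat.Prime q) (hk4 : k % 4 = 1)
    (hco : Nat.Coprime q n) (hN : N = q ^ k * n ^ 2)
    (hperf : sigma N = 2 * N) :
    sigma n ≠ q ^ k := by
  intro h
  have hsplit : sigma (q ^ k) * sigma (n ^ 2) = 2 * (q ^ k * n ^ 2) := by
    rw [← sigma_mul_of_coprime_s4 ((hco.pow_right 2).pow_left k), ← hN, hperf]
  have hdvd : q ∣ sigma (q ^ k) * sigma (n ^ 2) := by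
    rw [hsplit]
    exact ((dvd_pow_self q (by omega)).mul_right _).mul_left 2
  have hq_not_dvd : ¬ q ∣ sigma (q ^ k) := by
    rw [sigma_prime_pow hq]
    exact not_dvd_geom_sum_self hq.ne_one k
  exact not_dvd_sigma_sq_of_sigma_eq_pow hq hco h ((hq.dvd_mul.mp hdvd).resolve_left hq_not_dvd)

theorem stmt4 (q k n N : ℕ)
    (hq : Nat.Prime q) (hq4 : q % 4 = 1) (hk4 : k % 4 = 1)
    (hco : Nat.Coprime q n) (hN : N = q ^ k * n ^ 2)
    (hodd : Odd N) (hperf : sigma N = 2 * N) :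
    sigma n ≠ q ^ k :=
  stmt4_general q k n N hq hk4 hco hN hperf
end

section
/- If N = q^k * n^2 is an odd perfect number in Eulerian form, then 1 < I(q^k) < 5/4 < √(8/5) < I(n) < 2, where I(x) = σ(x)/x. -/
/-!
Multiplicativity splits the perfect-number equation into I(q^k) · I(n²) = 2. Since q ≡ 1 (mod 4)
is prime, q ≥ 5 and I(q^k) < q/(q-1) ≤ 5/4, so I(n²) > 8/5. The abundancy index is
submultiplicative, whence I(n)² ≥ I(n²) > 8/5, and monotone along divisibility, whence
I(n) ≤ I(n²) < 2.
-/

open Finset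

lemma sigma_mul_le (m n : ℕ) : sigma (m * n) ≤ sigma m * sigma n := by
  rw [sigma, Nat.divisors_mul, Finset.mul_def, sigma, sigma, sum_mul_sum, ← sum_product']
  exact sum_image_le_of_nonneg fun _ _ ↦ Nat.zero_le _

lemma lt_sigma {n : ℕ} (hn : 1 < n) : n < sigma n := by
  rw [sigma, Nat.sum_divisors_eq_sum_properDivisors_add_self]
  have : 0 < ∑ d ∈ n.properDivisors, d :=
    sum_pos' (fun _ _ ↦ Nat.zero_le _) ⟨1, Nat.one_mem_properDivisors_iff_one_lt.2 hn, one_pos⟩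
  omega

lemma Ir_mul_of_coprime {m n : ℕ} (h : m.Coprime n) : Ir (m * n) = Ir m * Ir n := by
  unfold Ir sigma
  rw [h.sum_divisors_mul]
  push_cast
  rw [mul_div_mul_comm]

lemma Ir_mul_le (m n : ℕ) : Ir (m * n) ≤ Ir m * Ir n := by
  rw [Ir, Ir, Ir, ← mul_div_mul_comm, Nat.cast_mul m]
  gcongr
  exact_mod_cast sigma_mul_le m n

lemma one_lt_Ir {n : ℕ} (hn : 1 < n) : 1 < Ir n := by
  rw [Ir, one_lt_div (by positivity)]
  exact_mod_cast lt_sigma hn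

lemma Ir_eq_sum_inv (n : ℕ) : Ir n = ∑ d ∈ n.divisors, (d : ℝ)⁻¹ := by
  rcases eq_or_ne n 0 with rfl | hn
  · simp [Ir]
  rw [Ir, sigma, ← Nat.sum_div_divisors, Nat.cast_sum, sum_div]
  refine sum_congr rfl fun d hd ↦ ?_
  have hd0 : (d : ℝ) ≠ 0 := by exact_mod_cast (Nat.pos_of_mem_divisors hd).ne'
  rw [Nat.cast_div (Nat.dvd_of_mem_divisors hd) hd0]
  field_simp

lemma Ir_le_of_dvd {m n : ℕ} (h : m ∣ n) (hn : n ≠ 0) : Ir m ≤ Ir n := by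
  rw [Ir_eq_sum_inv, Ir_eq_sum_inv]
  exact sum_le_sum_of_subset_of_nonneg (Nat.divisors_subset_of_dvd hn h)
    fun _ _ _ ↦ inv_nonneg.2 (Nat.cast_nonneg _)

lemma Ir_prime_pow {p : ℕ} (hp : p.Prime) (k : ℕ) :
    Ir (p ^ k) = (p ^ (k + 1) - 1) / ((p - 1) * p ^ k) := by
  have hp1 : (p : ℝ) ≠ 1 := by exact_mod_cast hp.one_lt.ne'
  rw [Ir, sigma, Nat.sum_divisors_prime_pow hp]
  push_cast
  rw [geom_sum_eq hp1, div_div]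

lemma Ir_prime_pow_lt {p : ℕ} (hp : p.Prime) (k : ℕ) : Ir (p ^ k) < p / (p - 1) := by
  have hp1 : (1 : ℝ) < p := by exact_mod_cast hp.one_lt
  rw [Ir_prime_pow hp, div_lt_div_iff₀ (by positivity) (by linarith), pow_succ]
  nlinarith [pow_pos (zero_lt_one.trans hp1) k]

lemma Ir_eq_two_of_perfect {N : ℕ} (hN : N ≠ 0) (h : sigma N = 2 * N) : Ir N = 2 := by
  rw [Ir, h]
  push_cast
  field_simp

theorem stmt9 (q k n N : ℕ)
    (hq : Nat.Prime q) (hq4 : q % 4 = 1) (hk4 : k % 4 = 1)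
    (hco : Nat.Coprime q n) (hN : N = q ^ k * n ^ 2)
    (hodd : Odd N) (hperf : sigma N = 2 * N) :
    1 < Ir (q ^ k) ∧ Ir (q ^ k) < 5 / 4 ∧ (5 : ℝ) / 4 < Real.sqrt (8 / 5) ∧ Real.sqrt (8 / 5) < Ir n ∧ Ir n < 2 := by
  have hq5 : (5 : ℝ) ≤ q := by exact_mod_cast show 5 ≤ q by have := hq.two_le; omega
  have hn : n ≠ 0 := by rintro rfl; simp [hN] at hodd
  have hprod : Ir (q ^ k) * Ir (n ^ 2) = 2 := by
    rw [← Ir_mul_of_coprime (hco.pow k 2), ← hN, Ir_eq_two_of_perfect hodd.pos.ne' hperf]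
  have hlow : 1 < Ir (q ^ k) := one_lt_Ir (Nat.one_lt_pow (by omega) hq.one_lt)
  have hup : Ir (q ^ k) < 5 / 4 := (Ir_prime_pow_lt hq k).trans_le <| by
    rw [div_le_div_iff₀ (by linarith) (by norm_num)]; linarith
  have hsq : Ir (n ^ 2) ≤ Ir n ^ 2 := by simpa only [sq] using Ir_mul_le n n
  have hsqrt : (5 : ℝ) / 4 < Real.sqrt (8 / 5) := by
    rw [Real.lt_sqrt (by norm_num)]; norm_num
  have hsq_gt : 8 / 5 < Ir (n ^ 2) := by nlinarith
  refine ⟨hlow, hup, hsqrt, ?_, ?_⟩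
  · calc √(8 / 5) < √(Ir n ^ 2) := Real.sqrt_lt_sqrt (by norm_num) (hsq_gt.trans_le hsq)
      _ = Ir n := Real.sqrt_sq (by unfold Ir; positivity)
  · calc Ir n ≤ Ir (n ^ 2) := Ir_le_of_dvd (dvd_pow_self n two_ne_zero) (pow_ne_zero 2 hn)
      _ < 2 := by nlinarith
end

section
/- If N = q^k * n^2 is an odd perfect number in Eulerian form, then I(q^k)^2 < I(n^2), where I(x) = σ(x)/x. -/
lemma sigma_mul {a b : ℕ} (h : a.Coprime b) : sigma (a * b) = sigma a * sigma b :=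
  h.sum_divisors_mul

lemma sigma_prime_pow_mul_sub_one {p : ℕ} (hp : p.Prime) (k : ℕ) :
    (sigma (p ^ k) : ℚ) * (p - 1) = p ^ (k + 1) - 1 := by
  rw [sigma, Nat.sum_divisors_prime_pow hp]
  push_cast
  exact geom_sum_mul _ _

lemma Iq_mul {a b : ℕ} (h : a.Coprime b) : Iq (a * b) = Iq a * Iq b := by
  simp only [Iq, sigma_mul h, Nat.cast_mul, mul_div_mul_comm]

lemma Iq_pos {n : ℕ} (hn : n ≠ 0) : 0 < Iq n := by
  have hn' : (0 : ℚ) < n := by exact_mod_cast Nat.pos_of_ne_zero hn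
  exact div_pos (hn'.trans_le (by exact_mod_cast le_sigma n)) hn'

lemma Iq_eq_two_of_sigma_eq {N : ℕ} (hN : N ≠ 0) (hperf : sigma N = 2 * N) : Iq N = 2 := by
  rw [Iq, hperf, Nat.cast_mul, Nat.cast_two, mul_div_assoc, div_self (by exact_mod_cast hN),
    mul_one]

lemma Iq_prime_pow_lt {p : ℕ} (hp : p.Prime) (k : ℕ) : Iq (p ^ k) < p / (p - 1) := by
  have hp1 : (0 : ℚ) < p - 1 := sub_pos.2 (by exact_mod_cast hp.one_lt)
  have hpk : (0 : ℚ) < p ^ k := pow_pos (by exact_mod_cast hp.pos) k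
  rw [Iq, Nat.cast_pow, div_lt_div_iff₀ hpk hp1]
  rw [sigma_prime_pow_mul_sub_one hp k, pow_succ']
  linarith

lemma sq_lt_of_mul_eq_of_pow_three_lt {K : Type*} [Field K] [LinearOrder K] [IsStrictOrderedRing K]
    {a b c : K} (ha : 0 < a) (hab : a * b = c) (h : a ^ 3 < c) : a ^ 2 < b := by
  rw [← hab, pow_succ', mul_lt_mul_iff_right₀ ha] at h
  exact h

theorem stmt10_general (q k n N : ℕ)
    (hq : Nat.Prime q) (hq4 : q % 4 = 1)
    (hco : Nat.Coprime q n) (hN : N = q ^ k * n ^ 2)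
    (hperf : sigma N = 2 * N) :
    (Iq (q ^ k)) ^ 2 < Iq (n ^ 2) := by
  have hn : n ≠ 0 := by
    rintro rfl
    exact hq.one_lt.ne' (Nat.coprime_zero_right q |>.1 hco)
  have hq5 : (5 : ℚ) ≤ q := by
    have := hq.two_le
    exact_mod_cast (by omega : 5 ≤ q)
  have hprod : Iq (q ^ k) * Iq (n ^ 2) = 2 := by
    rw [← Iq_mul (hco.pow k 2), ← hN]
    exact Iq_eq_two_of_sigma_eq (hN ▸ mul_ne_zero (pow_ne_zero k hq.ne_zero) (pow_ne_zero 2 hn)) hperf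
  have hlt : Iq (q ^ k) < 5 / 4 := by
    refine (Iq_prime_pow_lt hq k).trans_le ?_
    rw [div_le_div_iff₀ (by linarith) (by norm_num)]
    linarith
  have hpos : 0 < Iq (q ^ k) := Iq_pos (pow_ne_zero k hq.ne_zero)
  refine sq_lt_of_mul_eq_of_pow_three_lt hpos hprod ?_
  calc Iq (q ^ k) ^ 3 < (5 / 4) ^ 3 := by gcongr
    _ < 2 := by norm_num

theorem stmt10 (q k n N : ℕ)
    (hq : Nat.Prime q) (hq4 : q % 4 = 1) (hk4 : k % 4 = 1)
    (hco : Nat.Coprime q n) (hN : N = q ^ k * n ^ 2)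
    (hodd : Odd N) (hperf : sigma N = 2 * N) :
    (Iq (q ^ k)) ^ 2 < Iq (n ^ 2) :=
  stmt10_general q k n N hq hq4 hco hN hperf
end

section
/- For any prime q ≥ 5, the inequality 1 + 1/q + √(2q/(q+1)) > 3/2^(1/3) holds (strict, via the AM–GM inequality with equality case excluded). -/
/-! Write `a = 1 + 1/q` and `b = √(2q/(q+1))`, so that `a * b ^ 2 = 2`. AM–GM for `a, b/2, b/2`
gives `(a + b) ^ 3 ≥ 27 * a * b ^ 2 / 4 = 27 / 2`, with equality only if `b = 2 * a`; this is
impossible because `b < √2 < 2 < 2 * a`. -/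

theorem mul_sq_lt_four_mul_add_pow_three {a b : ℝ} (ha : 0 ≤ a) (hb : 0 ≤ b) (hab : b ≠ 2 * a) :
    27 * a * b ^ 2 < 4 * (a + b) ^ 3 := by
  have hsq : 0 < (b - 2 * a) ^ 2 := sq_pos_of_ne_zero (sub_ne_zero.mpr hab)
  have hpos : 0 < a + 4 * b := by
    by_contra! h
    exact hab (by linarith)
  have key : 4 * (a + b) ^ 3 - 27 * a * b ^ 2 = (a + 4 * b) * (b - 2 * a) ^ 2 := by ring
  linarith [mul_pos hpos hsq]

theorem three_div_cbrt_two_pow_three : (3 / (2 : ℝ) ^ ((1 : ℝ) / 3)) ^ 3 = 27 / 2 := by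
  rw [div_pow, one_div, ← Nat.cast_ofNat (n := 3), Real.rpow_inv_natCast_pow (by norm_num) (by norm_num)]
  norm_num

theorem three_div_cbrt_two_lt_add {a b : ℝ} (ha : 0 ≤ a) (hb : 0 ≤ b) (hab : a * b ^ 2 = 2)
    (hne : b ≠ 2 * a) : 3 / (2 : ℝ) ^ ((1 : ℝ) / 3) < a + b := by
  refine lt_of_pow_lt_pow_left₀ 3 (by positivity) ?_
  have amgm := mul_sq_lt_four_mul_add_pow_three ha hb hne
  rw [three_div_cbrt_two_pow_three]
  linarith

theorem one_add_one_div_mul_sqrt_sq {x : ℝ} (hx : 0 < x) :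
    (1 + 1 / x) * Real.sqrt (2 * x / (x + 1)) ^ 2 = 2 := by
  rw [Real.sq_sqrt (by positivity)]
  field_simp

theorem sqrt_lt_two_mul_one_add_one_div {x : ℝ} (hx : 0 < x) :
    Real.sqrt (2 * x / (x + 1)) < 2 * (1 + 1 / x) := by
  have hlt : 2 * x / (x + 1) < 4 := by
    rw [div_lt_iff₀ (by positivity)]
    linarith
  have hsqrt : Real.sqrt (2 * x / (x + 1)) < 2 := by
    rw [Real.sqrt_lt' (by norm_num)]
    linarith
  have hinv : 0 < 1 / x := by positivity
  linarith

theorem stmt12_general (q : ℕ) (hq : Nat.Prime q) :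
    1 + 1 / (q : ℝ) + Real.sqrt (2 * q / (q + 1)) > 3 / (2 : ℝ) ^ ((1 : ℝ) / 3) := by
  have hq0 : (0 : ℝ) < q := by exact_mod_cast hq.pos
  exact three_div_cbrt_two_lt_add (by positivity) (Real.sqrt_nonneg _)
    (one_add_one_div_mul_sqrt_sq hq0) (sqrt_lt_two_mul_one_add_one_div hq0).ne

theorem stmt12 (q : ℕ) (hq : Nat.Prime q) (hq5 : 5 ≤ q) :
    1 + 1 / (q : ℝ) + Real.sqrt (2 * q / (q + 1)) > 3 / (2 : ℝ) ^ ((1 : ℝ) / 3) :=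
  stmt12_general q hq
end

section
/- Let N = q^k * n^2 be an odd perfect number in Eulerian form. If I(q^k) + I(n) < σ(q^k)/n + σ(n)/q^k (as rationals), then q^k < n if and only if σ(q^k) < σ(n). -/
/-! With `a = q ^ k` and `b = n`, the hypothesis rearranges to
`(σ a - σ b) (a - b) / (a b) > 0`, so `a - b` and `σ a - σ b` have the same sign.
The degenerate cases `a = 0` and `b = 0` are excluded by the hypothesis itself: as `σ 0 = 0`
and `x / 0 = 0`, it would then say that an abundancy index is negative. -/

section OrderedField

variable {K : Type*} [Field K] [LinearOrder K] [IsStrictOrderedRing K]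

theorem div_add_div_lt_div_add_div_iff {x y s t : K} (hx : 0 < x) (hy : 0 < y) :
    s / x + t / y < s / y + t / x ↔ 0 < (s - t) * (x - y) := by
  have hdiff : s / y + t / x - (s / x + t / y) = (s - t) * (x - y) / (x * y) := by
    field_simp
    ring
  rw [← sub_pos, hdiff, div_pos_iff_of_pos_right (mul_pos hx hy)]

theorem lt_iff_lt_of_mul_sub_pos {x y s t : K} (h : 0 < (s - t) * (x - y)) :
    x < y ↔ s < t := by
  rcases mul_pos_iff.mp h with ⟨hst, hxy⟩ | ⟨hst, hxy⟩
  · exact iff_of_false (sub_pos.mp hxy).not_gt (sub_pos.mp hst).not_gt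
  · exact iff_of_true (sub_neg.mp hxy) (sub_neg.mp hst)

end OrderedField

@[simp]
theorem sigma_zero : sigma 0 = 0 := by
  simp [sigma]

theorem pos_of_Iq_add_Iq_lt {a b : ℕ}
    (h : Iq a + Iq b < (sigma a : ℚ) / b + (sigma b : ℚ) / a) : 0 < b := by
  rw [Nat.pos_iff_ne_zero]
  rintro rfl
  simp only [Iq, sigma_zero, Nat.cast_zero, div_zero, add_zero, zero_div] at h
  exact h.not_ge (by positivity)

theorem lt_iff_sigma_lt_of_Iq_add_Iq_lt {a b : ℕ}
    (h : Iq a + Iq b < (sigma a : ℚ) / b + (sigma b : ℚ) / a) : a < b ↔ sigma a < sigma b := by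
  have hb : (0 : ℚ) < b := by exact_mod_cast pos_of_Iq_add_Iq_lt h
  have ha : (0 : ℚ) < a := by
    refine Nat.cast_pos.mpr (pos_of_Iq_add_Iq_lt (a := b) (b := a) ?_)
    rwa [add_comm, add_comm ((sigma b : ℚ) / a)]
  rw [Iq, Iq, div_add_div_lt_div_add_div_iff ha hb] at h
  exact_mod_cast lt_iff_lt_of_mul_sub_pos h

theorem stmt14_general (q k n : ℕ)
    (h : Iq (q ^ k) + Iq n < (sigma (q ^ k) : ℚ) / n + (sigma n : ℚ) / q ^ k) :
    (q ^ k < n ↔ sigma (q ^ k) < sigma n) := by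
  apply lt_iff_sigma_lt_of_Iq_add_Iq_lt
  exact_mod_cast h

theorem stmt14 (q k n N : ℕ)
    (hq : Nat.Prime q) (hq4 : q % 4 = 1) (hk4 : k % 4 = 1)
    (hco : Nat.Coprime q n) (hN : N = q ^ k * n ^ 2)
    (hodd : Odd N) (hperf : sigma N = 2 * N) (h : Iq (q ^ k) + Iq n < (sigma (q ^ k) : ℚ) / n + (sigma n : ℚ) / q ^ k) :
    (q ^ k < n ↔ sigma (q ^ k) < sigma n) :=
  stmt14_general q k n h
end

section
/- Let N = q^k * n^2 be an odd perfect number in Eulerian form. If σ(q^k)/n + σ(n)/q^k < I(q^k) + I(n) (as rationals), then q^k < n if and only if σ(n) < σ(q^k). -/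
/-! Clearing denominators turns the hypothesis into `(σ(q^k) - σ(n)) * (q^k - n) < 0`: the two
differences have opposite signs. -/

theorem sub_mul_sub_neg_of_div_add_div_lt {K : Type*} [Field K] [LinearOrder K]
    [IsStrictOrderedRing K] {a b x y : K} (ha : 0 < a) (hb : 0 < b)
    (h : x / b + y / a < x / a + y / b) : (x - y) * (a - b) < 0 := by
  have hcleared : (x - y) * (a - b) = (x / b + y / a - (x / a + y / b)) * (a * b) := by
    field_simp
    ring
  rw [hcleared]
  exact mul_neg_of_neg_of_pos (sub_neg.2 h) (mul_pos ha hb)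

theorem lt_iff_lt_of_sub_mul_sub_neg {R : Type*} [CommRing R] [LinearOrder R]
    [IsStrictOrderedRing R] {a b x y : R} (h : (x - y) * (a - b) < 0) : a < b ↔ y < x := by
  rcases mul_neg_iff.1 h with ⟨hxy, hab⟩ | ⟨hxy, hab⟩ <;> constructor <;> intro <;> linarith

theorem stmt15_general (q k n N : ℕ)
    (hN : N = q ^ k * n ^ 2)
    (hodd : Odd N) (h : (sigma (q ^ k) : ℚ) / n + (sigma n : ℚ) / q ^ k < Iq (q ^ k) + Iq n) :
    (q ^ k < n ↔ sigma n < sigma (q ^ k)) := by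
  obtain ⟨hqk, hn⟩ := mul_ne_zero_iff.1 (hN ▸ hodd.pos.ne' : q ^ k * n ^ 2 ≠ 0)
  have hqk_pos : (0 : ℚ) < (q : ℚ) ^ k := by exact_mod_cast Nat.pos_of_ne_zero hqk
  have hn_pos : (0 : ℚ) < n := by exact_mod_cast Nat.pos_of_ne_zero (pow_ne_zero_iff two_ne_zero |>.1 hn)
  have key := sub_mul_sub_neg_of_div_add_div_lt hqk_pos hn_pos (by simpa only [Iq, Nat.cast_pow] using h)
  exact_mod_cast lt_iff_lt_of_sub_mul_sub_neg key

theorem stmt15 (q k n N : ℕ)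
    (hq : Nat.Prime q) (hq4 : q % 4 = 1) (hk4 : k % 4 = 1)
    (hco : Nat.Coprime q n) (hN : N = q ^ k * n ^ 2)
    (hodd : Odd N) (hperf : sigma N = 2 * N) (h : (sigma (q ^ k) : ℚ) / n + (sigma n : ℚ) / q ^ k < Iq (q ^ k) + Iq n) :
    (q ^ k < n ↔ sigma n < sigma (q ^ k)) :=
  stmt15_general q k n N hN hodd h
end
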